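/- arXiv:1402.3638 — 2 statements merged into one kernel-verified Lean document; each statement's English description precedes it below -/
import Mathlib

section
/- Let B be a semi-strongly disjoint set of bouquets of a simple hypergraph H. Then the flower set F(B) can be extended to a minimal vertex cover of H: there exists a minimal vertex cover C of H with F(B) ⊆ C. -/
/-!
The set `C₀ = V(H) \ (V(𝓑) \ F(𝓑))` is a vertex cover because `V(𝓑) \ F(𝓑)` is independent.
On an edge `E` of a bouquet, `C₀` keeps only the flower of `E`: every other vertex of `E` lies in
`V(𝓑)`, and no flower other than its own lies on `E` (within the bouquet by the flower condition,
across bouquets by semi-strong disjointness). Hence any minimal cover inside `C₀` must contain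
every flower.
-/

open Finset

structure SimpleHypergraph (α : Type*) [DecidableEq α] where
  edges : Finset (Finset α)
  nonempty_edges : ∀ E ∈ edges, E.Nonempty
  antichain : ∀ E ∈ edges, ∀ F ∈ edges, E ⊆ F → E = F

namespace SimpleHypergraph

variable {α : Type*} [DecidableEq α]

/-- The vertex set of a simple hypergraph: the union of its edges. -/
def verts (H : SimpleHypergraph α) : Finset α := H.edges.sup id

/-- `C` is a vertex cover: every edge meets `C`. -/
def IsCover (H : SimpleHypergraph α) (C : Finset α) : Prop :=
  ∀ E ∈ H.edges, ∃ v ∈ E, v ∈ C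

/-- `C` is a minimal vertex cover. -/
def IsMinCover (H : SimpleHypergraph α) (C : Finset α) : Prop :=
  H.IsCover C ∧ ∀ D ⊂ C, ¬ H.IsCover D

/-- `A` is independent: it contains no edge. -/
def Indep (H : SimpleHypergraph α) (A : Finset α) : Prop :=
  ∀ E ∈ H.edges, ¬ E ⊆ A

/-- The partial hypergraph of `H` on a vertex subset `U`. -/
def restrict (H : SimpleHypergraph α) (U : Finset α) : SimpleHypergraph α where
  edges := H.edges.filter (· ⊆ U)
  nonempty_edges := fun E hE => H.nonempty_edges E (Finset.mem_filter.mp hE).1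
  antichain := fun E hE F hF h =>
    H.antichain E (Finset.mem_filter.mp hE).1 F (Finset.mem_filter.mp hF).1 h

/-- The maximum cardinality of a minimal vertex cover (big height). -/
noncomputable def alpha0' (H : SimpleHypergraph α) : ℕ :=
  sSup {n : ℕ | ∃ C : Finset α, H.IsMinCover C ∧ n = C.card}

/-- A bouquet of `H`: a partial hypergraph whose edges have a common vertex,
with a designated flower in each edge belonging to no other edge. -/
structure BouquetOf (H : SimpleHypergraph α) where
  edges : Finset (Finset α)
  edges_nonempty : edges.Nonempty
  subset : edges ⊆ H.edges
  core : ∃ v, ∀ E ∈ edges, v ∈ E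
  flower : Finset α → α
  flower_spec : ∀ E ∈ edges, ∀ F ∈ edges, (flower E ∈ F ↔ E = F)

def BouquetOf.flowers {H : SimpleHypergraph α} (B : H.BouquetOf) : Finset α :=
  B.edges.image B.flower

def BouquetOf.verts {H : SimpleHypergraph α} (B : H.BouquetOf) : Finset α :=
  B.edges.sup id

/-- The union of the edge sets of a finite family of bouquets. -/
def famEdges {H : SimpleHypergraph α} {j : ℕ} (B : Fin j → H.BouquetOf) :
    Finset (Finset α) := Finset.univ.sup fun i => (B i).edges

/-- The union of the flower sets of a finite family of bouquets. -/
def famFlowers {H : SimpleHypergraph α} {j : ℕ} (B : Fin j → H.BouquetOf) :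
    Finset α := Finset.univ.sup fun i => (B i).flowers

/-- The union of the vertex sets of a finite family of bouquets. -/
def famVerts {H : SimpleHypergraph α} {j : ℕ} (B : Fin j → H.BouquetOf) :
    Finset α := Finset.univ.sup fun i => (B i).verts

/-- A semi-strongly disjoint family of bouquets of `H`. -/
def SSD (H : SimpleHypergraph α) {j : ℕ} (B : Fin j → H.BouquetOf) : Prop :=
  (∀ p q : Fin j, p ≠ q → ∀ E ∈ (B p).edges, ∀ f ∈ (B q).flowers, f ∉ E) ∧
  H.Indep (famVerts B \ famFlowers B)

/-- `d'_H`: the maximum of `|E(𝓑)|` over semi-strongly disjoint sets of bouquets. -/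
noncomputable def dPrime (H : SimpleHypergraph α) : ℕ :=
  sSup {n : ℕ | ∃ (j : ℕ) (B : Fin j → H.BouquetOf), H.SSD B ∧ n = (famEdges B).card}

end SimpleHypergraph

namespace SimpleHypergraph

variable {α : Type*} [DecidableEq α] {H : SimpleHypergraph α}

lemma isMinCover_iff_minimal {C : Finset α} : H.IsMinCover C ↔ Minimal H.IsCover C := by
  refine and_congr_right fun _ => ⟨fun h D hD hDC => ?_, fun h D hDC hD => ?_⟩
  · by_contra hCD
    exact h D (ssubset_of_subset_not_subset hDC hCD) hD
  · exact hDC.2 (h hD hDC.1)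

lemma exists_isMinCover_subset {C₀ : Finset α} (h : H.IsCover C₀) :
    ∃ C ⊆ C₀, H.IsMinCover C := by
  simpa only [isMinCover_iff_minimal] using exists_minimal_le_of_wellFoundedLT _ C₀ h

lemma mem_verts {E : Finset α} {v : α} (hE : E ∈ H.edges) (hv : v ∈ E) : v ∈ H.verts :=
  Finset.mem_sup.mpr ⟨E, hE, hv⟩

lemma isCover_verts_sdiff {A : Finset α} (hA : H.Indep A) : H.IsCover (H.verts \ A) := by
  intro E hE
  obtain ⟨v, hvE, hvA⟩ := Finset.not_subset.mp (hA E hE)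
  exact ⟨v, hvE, Finset.mem_sdiff.mpr ⟨mem_verts hE hvE, hvA⟩⟩

lemma mem_of_isCover_of_subset {C C₀ : Finset α} {E : Finset α} {f : α}
    (hC : H.IsCover C) (hCC₀ : C ⊆ C₀) (hE : E ∈ H.edges) (hEC₀ : E ∩ C₀ ⊆ {f}) :
    f ∈ C := by
  obtain ⟨v, hvE, hvC⟩ := hC E hE
  have hvf : v = f := Finset.mem_singleton.mp (hEC₀ (Finset.mem_inter.mpr ⟨hvE, hCC₀ hvC⟩))
  exact hvf ▸ hvC

section Family

variable {j : ℕ} {B : Fin j → H.BouquetOf}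

lemma mem_famFlowers {f : α} :
    f ∈ famFlowers B ↔ ∃ i, ∃ E ∈ (B i).edges, (B i).flower E = f := by
  simp only [famFlowers, BouquetOf.flowers, Finset.mem_sup, Finset.mem_image,
    Finset.mem_univ, true_and]

lemma subset_famVerts {i : Fin j} {E : Finset α} (hE : E ∈ (B i).edges) :
    E ⊆ famVerts B := fun _ hv =>
  Finset.mem_sup.mpr ⟨i, Finset.mem_univ i, Finset.mem_sup.mpr ⟨E, hE, hv⟩⟩

lemma SSD.eq_flower_of_mem_famFlowers (hB : H.SSD B) {i : Fin j} {E : Finset α}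
    (hE : E ∈ (B i).edges) {v : α} (hvE : v ∈ E) (hv : v ∈ famFlowers B) :
    v = (B i).flower E := by
  obtain ⟨q, E', hE', rfl⟩ := mem_famFlowers.mp hv
  obtain rfl | hqi := eq_or_ne q i
  · rw [((B q).flower_spec E' hE' E hE).mp hvE]
  · exact absurd hvE (hB.1 i q hqi.symm E hE _ (Finset.mem_image_of_mem _ hE'))

lemma SSD.inter_verts_sdiff_subset (hB : H.SSD B) {i : Fin j} {E : Finset α}
    (hE : E ∈ (B i).edges) :
    E ∩ (H.verts \ (famVerts B \ famFlowers B)) ⊆ {(B i).flower E} := by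
  intro v hv
  obtain ⟨hvE, hvC₀⟩ := Finset.mem_inter.mp hv
  have hvF : v ∈ famFlowers B := by
    by_contra hvF
    exact (Finset.mem_sdiff.mp hvC₀).2 (Finset.mem_sdiff.mpr ⟨subset_famVerts hE hvE, hvF⟩)
  exact Finset.mem_singleton.mpr (hB.eq_flower_of_mem_famFlowers hE hvE hvF)

end Family

end SimpleHypergraph

open SimpleHypergraph in
/-- the flower set of a semi-strongly disjoint set of bouquets
extends to a minimal vertex cover of `H`. -/
theorem stmt5 {α : Type*} [DecidableEq α] (H : SimpleHypergraph α)
    {j : ℕ} (B : Fin j → H.BouquetOf) (hB : H.SSD B) :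
    ∃ C : Finset α, H.IsMinCover C ∧ famFlowers B ⊆ C := by
  obtain ⟨C, hCC₀, hC⟩ := exists_isMinCover_subset (isCover_verts_sdiff hB.2)
  refine ⟨C, hC, fun f hf => ?_⟩
  obtain ⟨i, E, hE, rfl⟩ := mem_famFlowers.mp hf
  exact mem_of_isCover_of_subset hC.1 hCC₀ ((B i).subset hE) (hB.inter_verts_sdiff_subset hE)
end

section
/- For every minimal vertex cover C of a simple hypergraph H, there exists a semi-strongly disjoint set of bouquets B of H whose flower set F(B) equals C. -/
/-!
Minimality of a cover `C` means that every `v ∈ C` has a private edge `E_v`, one meeting `C` only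
in `v`. The single-edge bouquets `({E_v}, v)` then have flower set `C`; the private edges make them
pairwise flower-disjoint, and since `C` is a cover, no edge avoids the flowers.
-/

open Finset

namespace SimpleHypergraph

variable {α : Type*} [DecidableEq α] {H : SimpleHypergraph α}

theorem IsMinCover.exists_private_edge {C : Finset α} (hC : H.IsMinCover C) {v : α}
    (hv : v ∈ C) : ∃ E ∈ H.edges, v ∈ E ∧ ∀ w ∈ E, w ∈ C → w = v := by
  have hnot : ¬ H.IsCover (C.erase v) := hC.2 _ (erase_ssubset hv)
  simp only [IsCover, not_forall, not_exists, not_and, mem_erase] at hnot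
  obtain ⟨E, hE, hEC⟩ := hnot
  have hprivate : ∀ w ∈ E, w ∈ C → w = v := fun w hw hwC => by_contra fun hwv => hEC w hw hwv hwC
  obtain ⟨u, hu, huC⟩ := hC.1 E hE
  exact ⟨E, hE, hprivate u hu huC ▸ hu, hprivate⟩

theorem IsCover.indep_sdiff {C : Finset α} (hC : H.IsCover C) (A : Finset α) :
    H.Indep (A \ C) := fun E hE hEA => by
  obtain ⟨u, hu, huC⟩ := hC E hE
  exact (mem_sdiff.mp (hEA hu)).2 huC

namespace BouquetOf

def single (E : Finset α) (hE : E ∈ H.edges) (v : α) (hv : v ∈ E) : H.BouquetOf where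
  edges := {E}
  edges_nonempty := singleton_nonempty E
  subset := singleton_subset_iff.mpr hE
  core := ⟨v, fun F hF => mem_singleton.mp hF ▸ hv⟩
  flower := fun _ => v
  flower_spec := fun F hF G hG => by
    rw [mem_singleton] at hF hG
    subst hF hG
    simpa using hv

@[simp]
theorem single_edges (E : Finset α) (hE : E ∈ H.edges) (v : α) (hv : v ∈ E) :
    (single E hE v hv).edges = {E} := rfl

@[simp]
theorem flowers_single (E : Finset α) (hE : E ∈ H.edges) (v : α) (hv : v ∈ E) :
    (single E hE v hv).flowers = {v} := by
  simp [flowers, single]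

end BouquetOf

section Singles

variable {j : ℕ} (E : Fin j → Finset α) (hE : ∀ i, E i ∈ H.edges) (v : Fin j → α)
  (hv : ∀ i, v i ∈ E i)

theorem famFlowers_single :
    famFlowers (fun i => BouquetOf.single (E i) (hE i) (v i) (hv i)) = univ.image v := by
  ext x
  simp [famFlowers, eq_comm]

theorem ssd_single (hprivate : ∀ p q, v q ∈ E p → p = q) (hcover : H.IsCover (univ.image v)) :
    H.SSD (fun i => BouquetOf.single (E i) (hE i) (v i) (hv i)) := by
  refine ⟨fun p q hpq F hF f hf hfF => ?_, ?_⟩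
  · rw [BouquetOf.single_edges, mem_singleton] at hF
    rw [BouquetOf.flowers_single, mem_singleton] at hf
    subst hF hf
    exact hpq (hprivate p q hfF)
  · rw [famFlowers_single]
    exact hcover.indep_sdiff _

end Singles

end SimpleHypergraph

open SimpleHypergraph in
/-- every minimal vertex cover is the flower set of some
semi-strongly disjoint set of bouquets. -/
theorem stmt6 {α : Type*} [DecidableEq α] (H : SimpleHypergraph α)
    (C : Finset α) (hC : H.IsMinCover C) :
    ∃ (j : ℕ) (B : Fin j → H.BouquetOf), H.SSD B ∧ famFlowers B = C := by
  choose! E hE hvE hEC using fun v (hv : v ∈ C) => hC.exists_private_edge hv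
  let v : Fin C.card → α := fun i => C.equivFin.symm i
  have hvC (i : Fin C.card) : v i ∈ C := (C.equivFin.symm i).2
  have himage : univ.image v = C := by
    ext x
    simp only [mem_image, mem_univ, true_and]
    exact ⟨fun ⟨i, hi⟩ => hi ▸ hvC i, fun hx => ⟨C.equivFin ⟨x, hx⟩, by simp [v]⟩⟩
  have hprivate (p q : Fin C.card) (hq : v q ∈ E (v p)) : p = q :=
    C.equivFin.symm.injective (Subtype.ext (hEC _ (hvC p) _ hq (hvC q)).symm)
  refine ⟨C.card, fun i => BouquetOf.single (E (v i)) (hE _ (hvC i)) (v i) (hvE _ (hvC i)),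
    ssd_single _ _ _ _ hprivate (himage.symm ▸ hC.1), ?_⟩
  rw [famFlowers_single, himage]
end
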